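/- Let μ_opt be the optimal value of the SDP: maximize Tr([C D] V [C D]*) over Hermitian positive semidefinite V ∈ ℂ^{(n+m)×(n+m)} with [I 0]V[I 0]* = [A B]V[A B]* and Tr([0 I]V[0 I]*) ≤ 1, where A is Schur stable. Then there exist w ∈ ℂ^m with ‖w‖ ≤ 1 and θ ∈ ℝ such that, with x = (e^{iθ}I − A)^{−1}Bw, one has ‖Cx + Dw‖² = μ_opt. -/

import Mathlib

/-!
For a feasible `V = T Tᴴ`, the constraint `[I 0] V [I 0]ᴴ = [A B] V [A B]ᴴ` says that
`([I 0] T)ᴴ` and `([A B] T)ᴴ` have the same Gram matrix, so they differ by a unitary `U`.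
Expanding `T Tᴴ` in an orthonormal eigenbasis of `U` writes `V` as a sum of rank-one feasible
points `v vᴴ` with `[A B] v = λ [I 0] v`, `|λ| = 1`; by Schur stability these are exactly the
sinusoids `x = (λ I - A)⁻¹ B w`. Objective and input power are additive over the decomposition,
so some summand, normalised to unit input power, has objective at least `μ_opt`; being feasible
itself, it has objective exactly `μ_opt`.
-/

open Matrix Module Module.End
open scoped ComplexOrder InnerProductSpace

namespace LinearIsometry

section
variable {𝕜 E : Type*} [RCLike 𝕜] [NormedAddCommGroup E] [InnerProductSpace 𝕜 E]
  (f : E →ₗᵢ[𝕜] E)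

theorem norm_eq_one_of_apply_eq_smul {μ : 𝕜} {x : E} (hx : x ≠ 0) (h : f x = μ • x) :
    ‖μ‖ = 1 := by
  have : ‖μ‖ * ‖x‖ = 1 * ‖x‖ := by rw [← norm_smul, ← h, f.norm_map, one_mul]
  exact mul_right_cancel₀ (norm_ne_zero_iff.mpr hx) this

theorem orthogonalFamily_eigenspaces :
    OrthogonalFamily 𝕜 (fun μ => eigenspace f.toLinearMap μ)
      fun μ => (eigenspace f.toLinearMap μ).subtypeₗᵢ := by
  rintro μ ν hμν ⟨v, hv⟩ ⟨w, hw⟩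
  replace hv : f v = μ • v := mem_eigenspace_iff.mp hv
  replace hw : f w = ν • w := mem_eigenspace_iff.mp hw
  by_cases hv₀ : v = 0
  · simp [hv₀]
  have hμ : starRingEnd 𝕜 μ * μ = 1 := by
    rw [RCLike.conj_mul, f.norm_eq_one_of_apply_eq_smul hv₀ hv]; simp
  have key : ⟪v, w⟫_𝕜 = (starRingEnd 𝕜 μ * ν) * ⟪v, w⟫_𝕜 := by
    rw [mul_assoc, ← inner_smul_right, ← inner_smul_left, ← hv, ← hw, f.inner_map_map]
  have hne : starRingEnd 𝕜 μ * ν ≠ 1 := fun h =>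
    hμν (by rw [← mul_one μ, ← h, ← mul_assoc, mul_comm μ, hμ, one_mul])
  have : (1 - starRingEnd 𝕜 μ * ν) * ⟪v, w⟫_𝕜 = 0 := by rw [sub_mul, ← key]; ring
  simpa [sub_eq_zero, Ne.symm hne] using this

theorem apply_mem_orthogonal_eigenspace {μ : 𝕜} {v : E}
    (hv : v ∈ (eigenspace f.toLinearMap μ)ᗮ) : f v ∈ (eigenspace f.toLinearMap μ)ᗮ := by
  intro w hw
  replace hw : f w = μ • w := mem_eigenspace_iff.mp hw
  by_cases hw₀ : w = 0
  · simp [hw₀]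
  have hμ : starRingEnd 𝕜 μ * μ = 1 := by
    rw [RCLike.conj_mul, f.norm_eq_one_of_apply_eq_smul hw₀ hw]; simp
  have : w = f (starRingEnd 𝕜 μ • w) := by rw [map_smul, hw, smul_smul, hμ, one_smul]
  rw [this, f.inner_map_map, inner_smul_left, RCLike.conj_conj, hv w (mem_eigenspace_iff.mpr hw),
    mul_zero]

theorem apply_mem_orthogonal_iSup_eigenspaces {v : E}
    (hv : v ∈ (⨆ μ, eigenspace f.toLinearMap μ)ᗮ) : f v ∈ (⨆ μ, eigenspace f.toLinearMap μ)ᗮ := by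
  rw [← Submodule.iInf_orthogonal] at hv ⊢
  exact Submodule.mem_iInf _ |>.mpr fun μ =>
    f.apply_mem_orthogonal_eigenspace ((Submodule.mem_iInf _).mp hv μ)

end

section
variable {E : Type*} [NormedAddCommGroup E] [InnerProductSpace ℂ E] [FiniteDimensional ℂ E]
  (f : E →ₗᵢ[ℂ] E)

theorem orthogonal_iSup_eigenspaces_eq_bot : (⨆ μ, eigenspace f.toLinearMap μ)ᗮ = ⊥ := by
  set p := (⨆ μ, eigenspace f.toLinearMap μ)ᗮ
  have hp : ∀ v ∈ p, f.toLinearMap v ∈ p := fun v hv => f.apply_mem_orthogonal_iSup_eigenspaces hv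
  by_contra hne
  have : Nontrivial p := Submodule.nontrivial_iff_ne_bot.mpr hne
  obtain ⟨μ, hμ⟩ := Module.End.exists_eigenvalue (f.toLinearMap.restrict hp)
  refine hμ (eigenspace_restrict_eq_bot hp ?_)
  exact ((Submodule.isOrtho_orthogonal_right _).mono_left (le_iSup _ μ)).disjoint

theorem exists_orthonormalBasis_apply_eq_smul :
    ∃ (b : OrthonormalBasis (Fin (finrank ℂ E)) ℂ E) (c : Fin (finrank ℂ E) → ℂ),
      ∀ j, f (b j) = c j • b j := by
  have hfam : OrthogonalFamily ℂ (fun μ : Eigenvalues f.toLinearMap => eigenspace f.toLinearMap μ)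
      fun μ => (eigenspace f.toLinearMap μ).subtypeₗᵢ :=
    f.orthogonalFamily_eigenspaces.comp Subtype.coe_injective
  have hint :
      DirectSum.IsInternal fun μ : Eigenvalues f.toLinearMap => eigenspace f.toLinearMap μ := by
    refine hfam.isInternal_iff.mpr ?_
    show (⨆ μ : { μ // eigenspace f.toLinearMap μ ≠ ⊥ }, eigenspace f.toLinearMap μ)ᗮ = ⊥
    rw [iSup_ne_bot_subtype, f.orthogonal_iSup_eigenspaces_eq_bot]
  exact ⟨hint.subordinateOrthonormalBasis rfl hfam,
    fun j => Eigenvalues.val _ (hint.subordinateOrthonormalBasisIndex rfl j hfam),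
    fun j => mem_eigenspace_iff.mp (hint.subordinateOrthonormalBasis_subordinate rfl j hfam)⟩

end
end LinearIsometry

theorem LinearMap.exists_linearIsometry_apply_eq {𝕜 V W : Type*} [RCLike 𝕜] [AddCommGroup V]
    [Module 𝕜 V] [NormedAddCommGroup W] [InnerProductSpace 𝕜 W] [FiniteDimensional 𝕜 W]
    (a b : V →ₗ[𝕜] W) (h : ∀ x, ‖a x‖ = ‖b x‖) :
    ∃ u : W →ₗᵢ[𝕜] W, ∀ x, u (a x) = b x := by
  have hker : LinearMap.ker a ≤ LinearMap.ker b := fun x hx => by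
    rw [LinearMap.mem_ker, ← norm_eq_zero, ← h, norm_eq_zero]; exact hx
  let L : LinearMap.range a →ₗ[𝕜] W :=
    (LinearMap.ker a).liftQ b hker ∘ₗ a.quotKerEquivRange.symm.toLinearMap
  have hL : ∀ x, L ⟨a x, LinearMap.mem_range_self a x⟩ = b x := fun x => by
    simp [L, LinearMap.quotKerEquivRange_symm_apply_image]
  let L' : LinearMap.range a →ₗᵢ[𝕜] W :=
    { toLinearMap := L
      norm_map' := by rintro ⟨_, x, rfl⟩; simp only [hL, ← h]; rfl }
  exact ⟨L'.extend, fun x => (L'.extend_apply ⟨a x, LinearMap.mem_range_self a x⟩).trans (hL x)⟩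

namespace Matrix

theorem vecMulVec_smul_star_smul {q : Type*} {c : ℂ} (hc : ‖c‖ = 1) (u : q → ℂ) :
    vecMulVec (c • u) (star (c • u)) = vecMulVec u (star u) := by
  have : c * star c = 1 := by rw [RCLike.star_def, RCLike.mul_conj, hc]; simp
  ext i j
  simp only [vecMulVec_apply, Pi.smul_apply, Pi.star_apply, smul_eq_mul, star_mul']
  linear_combination (u i * star (u j)) * this

theorem mul_vecMulVec_star_mul_conjTranspose {p q α : Type*} [Fintype q] [CommSemiring α]
    [StarRing α] (M : Matrix p q α) (v : q → α) :
    M * vecMulVec v (star v) * Mᴴ = vecMulVec (M *ᵥ v) (star (M *ᵥ v)) := by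
  rw [mul_vecMulVec, vecMulVec_mul, star_mulVec]

variable {p q : Type*} [Fintype p] [Fintype q]

theorem sum_norm_smul_sq (c : ℂ) (u : q → ℂ) :
    ∑ i, ‖(c • u) i‖ ^ 2 = ‖c‖ ^ 2 * ∑ i, ‖u i‖ ^ 2 := by
  simp [mul_pow, Finset.mul_sum]

theorem sum_norm_sq_eq_zero_iff {u : q → ℂ} : ∑ i, ‖u i‖ ^ 2 = 0 ↔ u = 0 := by
  simp [Finset.sum_eq_zero_iff_of_nonneg, funext_iff]

theorem re_trace_vecMulVec_star (u : q → ℂ) :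
    (vecMulVec u (star u)).trace.re = ∑ i, ‖u i‖ ^ 2 := by
  simp [dotProduct, Complex.mul_conj, Complex.normSq_eq_norm_sq]
  norm_cast

theorem re_trace_mul_sum_vecMulVec_star_mul_conjTranspose {ι : Type*} [Fintype ι]
    (M : Matrix q p ℂ) (v : ι → p → ℂ) :
    (M * (∑ j, vecMulVec (v j) (star (v j))) * Mᴴ).trace.re =
      ∑ j, ∑ i, ‖(M *ᵥ v j) i‖ ^ 2 := by
  simp only [Matrix.mul_sum, Matrix.sum_mul, trace_sum, Complex.re_sum,
    mul_vecMulVec_star_mul_conjTranspose, re_trace_vecMulVec_star]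

theorem _root_.OrthonormalBasis.sum_vecMulVec_star_eq_one [DecidableEq p]
    (b : OrthonormalBasis q ℂ (EuclideanSpace ℂ p)) :
    ∑ j, vecMulVec (b j).ofLp (star (b j).ofLp) = 1 := by
  rw [← (EuclideanSpace.basisFun p ℂ).toMatrix_orthonormalBasis_self_mul_conjTranspose b]
  ext i k
  simp [Matrix.mul_apply, vecMulVec_apply, Matrix.sum_apply, Basis.toMatrix_apply]

theorem eq_inv_mulVec_of_mulVec_add_eq_smul [DecidableEq q] {A : Matrix q q ℂ}
    {B : Matrix q p ℂ} {c : ℂ} (hc : c ∉ spectrum ℂ A) {x : q → ℂ} {w : p → ℂ}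
    (h : A *ᵥ x + B *ᵥ w = c • x) :
    x = (c • 1 - A)⁻¹ *ᵥ (B *ᵥ w) := by
  have hu : IsUnit (c • 1 - A).det := by
    rw [← isUnit_iff_isUnit_det, ← Algebra.algebraMap_eq_smul_one]
    exact spectrum.notMem_iff.mp hc
  have hx : (c • 1 - A) *ᵥ x = B *ᵥ w := by
    rw [sub_mulVec, smul_mulVec, one_mulVec, ← h, add_sub_cancel_left]
  rw [← hx, mulVec_mulVec, nonsing_inv_mul _ hu, one_mulVec]

variable [DecidableEq p] [DecidableEq q]

theorem inner_toEuclideanLin_conjTranspose (M : Matrix q p ℂ) (x : EuclideanSpace ℂ q)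
    (y : EuclideanSpace ℂ p) : ⟪toEuclideanLin Mᴴ x, y⟫_ℂ = ⟪x, toEuclideanLin M y⟫_ℂ := by
  rw [toEuclideanLin_conjTranspose_eq_adjoint, LinearMap.adjoint_inner_left]

open scoped MatrixOrder in
theorem PosSemidef.exists_eq_sum_vecMulVec_star_of_conj_eq {V : Matrix p p ℂ}
    (hV : V.PosSemidef) {E F : Matrix q p ℂ} (h : E * V * Eᴴ = F * V * Fᴴ) :
    ∃ (k : ℕ) (v : Fin k → p → ℂ) (c : Fin k → ℂ), (∀ j, ‖c j‖ = 1) ∧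
      (∀ j, F *ᵥ v j = c j • E *ᵥ v j) ∧ V = ∑ j, vecMulVec (v j) (star (v j)) := by
  obtain ⟨B, rfl⟩ := CStarAlgebra.nonneg_iff_eq_star_mul_self.mp hV.nonneg
  set T := Bᴴ
  have hgram : ∀ (M : Matrix q p ℂ) x,
      ⟪toEuclideanLin (M * T)ᴴ x, toEuclideanLin (M * T)ᴴ x⟫_ℂ =
        ⟪x, toEuclideanLin (M * (star B * B) * Mᴴ) x⟫_ℂ := by
    intro M x
    have hMT : M * T * (M * T)ᴴ = M * (star B * B) * Mᴴ := by
      simp [T, Matrix.mul_assoc, star_eq_conjTranspose]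
    rw [inner_toEuclideanLin_conjTranspose, ← LinearMap.comp_apply, ← toLpLin_mul_same, hMT]
  obtain ⟨u, hu⟩ := LinearMap.exists_linearIsometry_apply_eq (toEuclideanLin (F * T)ᴴ)
    (toEuclideanLin (E * T)ᴴ) fun x => by
      rw [norm_eq_sqrt_re_inner (𝕜 := ℂ), norm_eq_sqrt_re_inner (𝕜 := ℂ), hgram, hgram, h]
  obtain ⟨b, c, hbc⟩ := u.exists_orthonormalBasis_apply_eq_smul
  refine ⟨_, fun j => T *ᵥ (b j).ofLp, c, fun j => u.norm_eq_one_of_apply_eq_smul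
    (b.orthonormal.ne_zero j) (hbc j), fun j => ?_, ?_⟩
  · -- `⟪y, F T z⟫ = ⟪u ((F T)ᴴ y), u z⟫ = ⟪(E T)ᴴ y, c z⟫ = c ⟪y, E T z⟫`
    have : toEuclideanLin (F * T) (b j) = c j • toEuclideanLin (E * T) (b j) := by
      refine ext_inner_left ℂ fun y => ?_
      rw [← inner_toEuclideanLin_conjTranspose, ← u.inner_map_map, hu, hbc, inner_smul_right,
        inner_smul_right, inner_toEuclideanLin_conjTranspose]
    simpa [Matrix.mulVec_mulVec] using congrArg WithLp.ofLp this
  · calc star B * B = T * (∑ j, vecMulVec (b j).ofLp (star (b j).ofLp)) * Tᴴ := by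
          rw [b.sum_vecMulVec_star_eq_one, Matrix.mul_one, conjTranspose_conjTranspose,
            star_eq_conjTranspose]
      _ = _ := by
          simp only [Matrix.mul_sum, Matrix.sum_mul, mul_vecMulVec_star_mul_conjTranspose]

end Matrix

theorem Finset.exists_pos_mul_le_of_sum_eq {ι : Type*} {S : Finset ι} {a b : ι → ℝ} {μ : ℝ}
    (hμ : 0 < μ) (ha : ∑ j ∈ S, a j = μ) (hb : ∑ j ∈ S, b j ≤ 1) (hb₀ : ∀ j ∈ S, 0 ≤ b j)
    (hab : ∀ j ∈ S, b j = 0 → a j = 0) : ∃ j ∈ S, 0 < b j ∧ μ * b j ≤ a j := by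
  classical
  have ha' : ∑ j ∈ S with b j ≠ 0, a j = μ :=
    (Finset.sum_filter_of_ne (p := fun j => b j ≠ 0) fun j hj haj hbj =>
      haj (hab j hj hbj)).trans ha
  have hb' : ∑ j ∈ S with b j ≠ 0, b j = ∑ j ∈ S, b j := Finset.sum_filter_ne_zero _
  have hne : (S.filter fun j => b j ≠ 0).Nonempty :=
    Finset.nonempty_of_sum_ne_zero (ha'.trans_ne hμ.ne')
  obtain ⟨j, hj, hle⟩ := Finset.exists_le_of_sum_le hne (f := fun j => μ * b j) (g := a) <| by
    rw [← Finset.mul_sum, hb', ha']; nlinarith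
  obtain ⟨hjS, hj0⟩ := Finset.mem_filter.mp hj
  exact ⟨j, hjS, (hb₀ j hjS).lt_of_ne' hj0, hle⟩

section SDP
variable {p q r s : Type*} [Fintype p] [Fintype r] [Fintype s]

def sdpValues (E F : Matrix q p ℂ) (G : Matrix r p ℂ) (H : Matrix s p ℂ) : Set ℝ :=
  {x | ∃ V : Matrix p p ℂ, V.PosSemidef ∧ E * V * Eᴴ = F * V * Fᴴ ∧
    (G * V * Gᴴ).trace.re ≤ 1 ∧ x = (H * V * Hᴴ).trace.re}

variable {E F : Matrix q p ℂ} {G : Matrix r p ℂ} {H : Matrix s p ℂ}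

theorem sum_norm_sq_mem_sdpValues {v : p → ℂ} {c : ℂ} (hc : ‖c‖ = 1)
    (hv : F *ᵥ v = c • E *ᵥ v) (hG : ∑ i, ‖(G *ᵥ v) i‖ ^ 2 ≤ 1) :
    ∑ i, ‖(H *ᵥ v) i‖ ^ 2 ∈ sdpValues E F G H := by
  refine ⟨vecMulVec v (star v), posSemidef_vecMulVec_self_star v, ?_, ?_, ?_⟩ <;>
    simp only [mul_vecMulVec_star_mul_conjTranspose, re_trace_vecMulVec_star, hv,
      vecMulVec_smul_star_smul hc, hG]

theorem exists_sum_norm_sq_eq_of_isGreatest_sdpValues [Fintype q] [DecidableEq p] [DecidableEq q]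
    {μ : ℝ} (hμ : IsGreatest (sdpValues E F G H) μ)
    (hnondeg : ∀ (v : p → ℂ) (c : ℂ), ‖c‖ = 1 → F *ᵥ v = c • E *ᵥ v → G *ᵥ v = 0 → v = 0) :
    ∃ (v : p → ℂ) (c : ℂ), ‖c‖ = 1 ∧ F *ᵥ v = c • E *ᵥ v ∧
      ∑ i, ‖(G *ᵥ v) i‖ ^ 2 ≤ 1 ∧ ∑ i, ‖(H *ᵥ v) i‖ ^ 2 = μ := by
  obtain ⟨⟨V, hV, hEF, hGV, rfl⟩, hub⟩ := hμ
  obtain ⟨k, v, c, hc, hvc, rfl⟩ := hV.exists_eq_sum_vecMulVec_star_of_conj_eq hEF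
  rw [re_trace_mul_sum_vecMulVec_star_mul_conjTranspose] at hGV hub ⊢
  set a := fun j => ∑ i, ‖(H *ᵥ v j) i‖ ^ 2
  set b := fun j => ∑ i, ‖(G *ᵥ v j) i‖ ^ 2
  obtain hμ | hμ := (by positivity : 0 ≤ ∑ j, a j).eq_or_lt
  · exact ⟨0, 1, norm_one, by simp, by simp, by simpa using hμ⟩
  obtain ⟨j, -, hbj, hle⟩ := Finset.exists_pos_mul_le_of_sum_eq hμ rfl hGV
    (fun j _ => by positivity) fun j _ hb => by
      simp [a, hnondeg (v j) (c j) (hc j) (hvc j) (sum_norm_sq_eq_zero_iff.mp hb)]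
  set t : ℂ := (((√(b j))⁻¹ : ℝ) : ℂ)
  have ht : ‖t‖ ^ 2 * b j = 1 := by
    rw [Complex.norm_real, Real.norm_eq_abs, sq_abs, inv_pow, Real.sq_sqrt hbj.le,
      inv_mul_cancel₀ hbj.ne']
  have hrel : F *ᵥ (t • v j) = c j • E *ᵥ (t • v j) := by
    rw [mulVec_smul, mulVec_smul, hvc, smul_comm]
  have hG1 : ∑ i, ‖(G *ᵥ (t • v j)) i‖ ^ 2 = 1 := by rw [mulVec_smul, sum_norm_smul_sq, ht]
  refine ⟨t • v j, c j, hc j, hrel, hG1.le, le_antisymm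
    (hub (sum_norm_sq_mem_sdpValues (hc j) hrel hG1.le)) ?_⟩
  calc ∑ j, a j = ‖t‖ ^ 2 * b j * ∑ j, a j := by rw [ht, one_mul]
    _ ≤ ‖t‖ ^ 2 * a j := by rw [mul_assoc]; gcongr; linarith
    _ = _ := by rw [mulVec_smul, sum_norm_smul_sq]

end SDP

/-- The SDP optimal value `μ_opt` is attained by a single-frequency sinusoidal
input: there are `w` with `‖w‖ ≤ 1` and `θ ∈ ℝ` such that with
`x = (e^{iθ}I − A)⁻¹ B w`, `‖Cx + Dw‖² = μ_opt`. -/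
theorem sdp_value_attained_by_sinusoid
    (n m l : ℕ) (A : Matrix (Fin n) (Fin n) ℂ) (B : Matrix (Fin n) (Fin m) ℂ)
    (C : Matrix (Fin l) (Fin n) ℂ) (D : Matrix (Fin l) (Fin m) ℂ)
    (hA : ∀ μ ∈ spectrum ℂ A, ‖μ‖ < 1)
    (μopt : ℝ)
    (hopt : IsGreatest {r : ℝ | ∃ V : Matrix (Fin n ⊕ Fin m) (Fin n ⊕ Fin m) ℂ,
        V.PosSemidef ∧
        (Matrix.fromCols (1 : Matrix (Fin n) (Fin n) ℂ) (0 : Matrix (Fin n) (Fin m) ℂ)) * V *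
            (Matrix.fromCols (1 : Matrix (Fin n) (Fin n) ℂ) (0 : Matrix (Fin n) (Fin m) ℂ))ᴴ =
          (Matrix.fromCols A B) * V * (Matrix.fromCols A B)ᴴ ∧
        ((Matrix.fromCols (0 : Matrix (Fin m) (Fin n) ℂ) (1 : Matrix (Fin m) (Fin m) ℂ)) * V *
            (Matrix.fromCols (0 : Matrix (Fin m) (Fin n) ℂ) (1 : Matrix (Fin m) (Fin m) ℂ))ᴴ).trace.re ≤ 1 ∧
        r = (Matrix.fromCols C D * V * (Matrix.fromCols C D)ᴴ).trace.re} μopt) :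
    ∃ (w : Fin m → ℂ) (θ : ℝ),
      (∑ i, ‖w i‖ ^ 2) ≤ 1 ∧
      (∑ i, ‖(C *ᵥ ((Complex.exp (θ * Complex.I) • (1 : Matrix (Fin n) (Fin n) ℂ) - A)⁻¹
          *ᵥ (B *ᵥ w)) + D *ᵥ w) i‖ ^ 2) = μopt := by
  have hres : ∀ c : ℂ, ‖c‖ = 1 → ∀ x w, A *ᵥ x + B *ᵥ w = c • x →
      x = (c • 1 - A)⁻¹ *ᵥ (B *ᵥ w) :=
    fun c hc _ _ => eq_inv_mulVec_of_mulVec_add_eq_smul fun hmem => (hA c hmem).ne hc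
  obtain ⟨v, c, hc, hvc, hw, hval⟩ := exists_sum_norm_sq_eq_of_isGreatest_sdpValues hopt
    fun v c hc hvc hv0 => by
      simp only [fromCols_mulVec, one_mulVec, zero_mulVec, add_zero, zero_add] at hvc hv0
      have hx := hres c hc _ _ hvc
      rw [hv0, mulVec_zero, mulVec_zero] at hx
      ext (i | i)
      · exact congrFun hx i
      · exact congrFun hv0 i
  simp only [fromCols_mulVec, one_mulVec, zero_mulVec, add_zero, zero_add] at hvc hw hval
  have hθ : Complex.exp (c.arg * Complex.I) = c := by
    simpa [hc] using Complex.norm_mul_exp_arg_mul_I c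
  refine ⟨v ∘ Sum.inr, c.arg, hw, ?_⟩
  rw [hθ, ← hres c hc _ _ hvc, hval]
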